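/- arXiv:1602.04700 — 5 statements merged into one kernel-verified Lean document; each statement's English description precedes it below -/
import Mathlib

section
/- If Φ : X → [0,∞] is proper, convex, lower semicontinuous, strictly convex on its domain, positively homogeneous of degree p, and has compact sublevel sets, then there exists w ∈ X \ {0} achieving λ_p := inf{ pΦ(u)/‖u‖^p : u ≠ 0 }, and λ_p > 0. -/
open Filter Set MeasureTheory Topology
open scoped ENNReal NNReal

noncomputable section

variable {X : Type*} [NormedAddCommGroup X] [NormedSpace ℝ X] [CompleteSpace X]

/-- Subdifferential of an `EReal`-valued functional `Φ` at `u`. -/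
def ERealSubdiff (Φ : X → EReal) (u : X) : Set (X →L[ℝ] ℝ) :=
  {ξ | ∀ w : X, Φ u + ((ξ (w - u) : ℝ) : EReal) ≤ Φ w}

/-- The duality map `J_p`: the subdifferential of `‖·‖^p / p` at `u`. -/
def Jdual (p : ℝ) (u : X) : Set (X →L[ℝ] ℝ) :=
  {ξ | ∀ w : X, ‖u‖ ^ p / p + ξ (w - u) ≤ ‖w‖ ^ p / p}

/-- Convexity for an `EReal`-valued functional. -/
def IsConvexE (Φ : X → EReal) : Prop :=
  ∀ u v : X, ∀ a b : ℝ, 0 ≤ a → 0 ≤ b → a + b = 1 →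
    Φ (a • u + b • v) ≤ (a : EReal) * Φ u + (b : EReal) * Φ v

/-- Strict convexity on the domain `{Φ < ∞}`. -/
def IsStrictConvexOnDom (Φ : X → EReal) : Prop :=
  ∀ u v : X, Φ u ≠ ⊤ → Φ v ≠ ⊤ → u ≠ v → ∀ a b : ℝ, 0 < a → 0 < b → a + b = 1 →
    Φ (a • u + b • v) < (a : EReal) * Φ u + (b : EReal) * Φ v

/-- Positive homogeneity of degree `p`. -/
def IsHomog (Φ : X → EReal) (p : ℝ) : Prop :=
  ∀ t : ℝ, 0 ≤ t → ∀ u : X, Φ (t • u) = ((t ^ p : ℝ) : EReal) * Φ u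

/-- The set of Rayleigh quotients `p Φ(u)/‖u‖^p` over nonzero `u` in the domain. -/
def RayleighSet (Φ : X → EReal) (p : ℝ) : Set ℝ :=
  {r | ∃ u : X, u ≠ 0 ∧ Φ u ≠ ⊤ ∧ r = p * (Φ u).toReal / ‖u‖ ^ p}

/-- Simplicity of the least Rayleigh quotient `lam`. -/
def IsSimple (Φ : X → EReal) (p lam : ℝ) : Prop :=
  ∀ u v : X, u ≠ 0 → v ≠ 0 → Φ u ≠ ⊤ → Φ v ≠ ⊤ →
    lam = p * (Φ u).toReal / ‖u‖ ^ p → lam = p * (Φ v).toReal / ‖v‖ ^ p →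
    ∃ c : ℝ, v = c • u

/-- `P_w(u)`: best approximations of `u` from the ray `{β w : β ≥ 0}`. -/
def ProjRay (w u : X) : Set X :=
  {x | ∃ α : ℝ, 0 ≤ α ∧ x = α • w ∧ ∀ β : ℝ, 0 ≤ β → ‖u - α • w‖ ≤ ‖u - β • w‖}

/-- `α_w(u) := inf {α > 0 : α w ∈ P_w(u)}`. -/
def alphaRay (w u : X) : ℝ :=
  sInf {α : ℝ | 0 < α ∧ α • w ∈ ProjRay w u}

/-- Local absolute continuity of a path on `[0, ∞)`. -/
def LocAC {E : Type*} [NormedAddCommGroup E] (v : ℝ → E) : Prop :=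
  ∀ T : ℝ, 0 < T → ∃ h : ℝ → ℝ, IntegrableOn h (Icc 0 T) ∧
    ∀ s t : ℝ, 0 ≤ s → s ≤ t → t ≤ T → ‖v t - v s‖ ≤ ∫ τ in Icc s t, h τ

/-- `m` is the metric derivative of `v` (a.e. on `(0,∞)`). -/
def HasMetricDeriv {E : Type*} [NormedAddCommGroup E] (v : ℝ → E) (m : ℝ → ℝ) : Prop :=
  ∀ᵐ t ∂(volume.restrict (Ioi (0:ℝ))),
    Tendsto (fun h : ℝ => ‖v (t + h) - v t‖ / |h|) (𝓝[≠] 0) (𝓝 (m t))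

/-- Local slope `|∂Φ|(u) = limsup_{z → 0} (Φ(u) − Φ(u+z))⁺ / ‖z‖`, valued in `[0,∞]`. -/
def localSlope (Φ : X → EReal) (u : X) : ℝ≥0∞ :=
  Filter.limsup (fun z : X => ENNReal.ofReal ((Φ u - Φ (u + z)).toReal / ‖z‖)) (𝓝[≠] (0 : X))

/-- `v` is a `p`-curve of maximal slope for `Φ`, with metric derivative `m` and with
`φ` a real-valued a.e.-differentiable representative of `Φ ∘ v`; the defining inequality
`(Φ ∘ v)' ≤ -m^p/p - |∂Φ|(v)^q/q` holds a.e. on `(0,∞)`. -/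
def IsPCurve (Φ : X → EReal) (p q : ℝ) (v : ℝ → X) (m : ℝ → ℝ) (φ : ℝ → ℝ) : Prop :=
  LocAC v ∧ HasMetricDeriv v m ∧ (∀ t : ℝ, 0 ≤ t → (φ t : EReal) = Φ (v t)) ∧
  ∀ᵐ t ∂(volume.restrict (Ioi (0:ℝ))),
    ∃ d : ℝ, HasDerivAt φ d t ∧ d ≤ 0 ∧
      ENNReal.ofReal (m t ^ p / p) + localSlope Φ (v t) ^ q / ENNReal.ofReal q ≤
        ENNReal.ofReal (-d)

/-!
By homogeneity the Rayleigh quotient of `u ≠ 0` is `p Φ(u / ‖u‖)`, so `λ_p` is `p` times the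
infimum of `Φ` on the unit sphere. The sphere is closed, so its intersection with a compact
sublevel set through a point of the domain is compact and nonempty; the lower semicontinuous `Φ`
attains its minimum there, and this is its minimum on the whole sphere. The minimum is positive:
if `Φ w = 0` with `w ≠ 0`, strict convexity between `w` and `0` would give `Φ (w / 2) < 0`.
-/

theorem LowerSemicontinuous.exists_isMinOn_of_isCompact_sublevel {α β : Type*}
    [TopologicalSpace α] [LinearOrder β] {f : α → β} (hf : LowerSemicontinuous f)
    {F : Set α} (hF : IsClosed F) {x₀ : α} (hx₀ : x₀ ∈ F)
    (hK : IsCompact {x | f x ≤ f x₀}) : ∃ w ∈ F, IsMinOn f F w := by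
  have hne : ({x | f x ≤ f x₀} ∩ F).Nonempty := ⟨x₀, le_rfl, hx₀⟩
  obtain ⟨w, ⟨-, hwF⟩, hmin⟩ :=
    (hf.lowerSemicontinuousOn _).exists_isMinOn hne (hK.inter_right hF)
  refine ⟨w, hwF, isMinOn_iff.2 fun x hx => ?_⟩
  rcases le_total (f x) (f x₀) with h | h
  · exact isMinOn_iff.1 hmin x ⟨h, hx⟩
  · exact (isMinOn_iff.1 hmin x₀ ⟨le_rfl, hx₀⟩).trans h

section

variable {E : Type*} [NormedAddCommGroup E] [NormedSpace ℝ E] {Φ : E → EReal} {p : ℝ}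

namespace IsHomog

theorem apply_zero (hhom : IsHomog Φ p) (hp : p ≠ 0) : Φ 0 = 0 := by
  simpa [Real.zero_rpow hp] using hhom 0 le_rfl 0

theorem apply_smul_ne_top (hhom : IsHomog Φ p) {t : ℝ} (ht : 0 ≤ t) {u : E}
    (hu : Φ u ≠ ⊤) : Φ (t • u) ≠ ⊤ := by
  rw [hhom t ht u, EReal.mul_ne_top]
  exact ⟨.inl (EReal.coe_ne_bot _), .inl (EReal.coe_nonneg.2 (Real.rpow_nonneg ht p)),
    .inl (EReal.coe_ne_top _), .inr hu⟩

theorem toReal_apply_smul (hhom : IsHomog Φ p) {t : ℝ} (ht : 0 ≤ t) (u : E) :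
    (Φ (t • u)).toReal = t ^ p * (Φ u).toReal := by
  rw [hhom t ht u, EReal.toReal_mul, EReal.toReal_coe]

theorem mul_toReal_div_norm_rpow_eq (hhom : IsHomog Φ p) (u : E) :
    p * (Φ u).toReal / ‖u‖ ^ p = p * (Φ (‖u‖⁻¹ • u)).toReal := by
  rw [hhom.toReal_apply_smul (inv_nonneg.2 (norm_nonneg u)), Real.inv_rpow (norm_nonneg u)]
  ring

end IsHomog

theorem IsStrictConvexOnDom.apply_pos (hsc : IsStrictConvexOnDom Φ) (hnn : ∀ x, 0 ≤ Φ x)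
    (h0 : Φ 0 = 0) {w : E} (hw : w ≠ 0) : 0 < Φ w := by
  refine (hnn w).lt_of_ne fun hw0 => ?_
  have := hsc w 0 (hw0 ▸ EReal.zero_ne_top) (h0 ▸ EReal.zero_ne_top) hw (1 / 2) (1 / 2)
    (by norm_num) (by norm_num) (by norm_num)
  rw [← hw0, h0] at this
  simp only [mul_zero, add_zero] at this
  exact this.not_ge (hnn _)

theorem isLeast_rayleighSet (hp : 0 ≤ p) (hhom : IsHomog Φ p) {w : E}
    (hw : w ∈ Metric.sphere 0 1) (hwT : Φ w ≠ ⊤) (hwB : Φ w ≠ ⊥)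
    (hmin : IsMinOn Φ (Metric.sphere 0 1) w) :
    IsLeast (RayleighSet Φ p) (p * (Φ w).toReal) := by
  rw [mem_sphere_zero_iff_norm] at hw
  refine ⟨⟨w, norm_ne_zero_iff.1 (by simp [hw]), hwT, by rw [hw, Real.one_rpow, div_one]⟩, ?_⟩
  rintro r ⟨u, hu, huT, rfl⟩
  have hsmulT := hhom.apply_smul_ne_top (inv_nonneg.2 (norm_nonneg u)) huT
  rw [hhom.mul_toReal_div_norm_rpow_eq u]
  have : Φ w ≤ Φ (‖u‖⁻¹ • u) := isMinOn_iff.1 hmin _ (by simp [norm_smul, hu])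
  exact mul_le_mul_of_nonneg_left (EReal.toReal_le_toReal this hwB hsmulT) hp

end

theorem minimizer_exists_general (Φ : X → EReal) (p : ℝ) (hp : 1 < p)
    (hnn : ∀ x : X, (0 : EReal) ≤ Φ x)
    (hproper : ∃ u : X, u ≠ 0 ∧ Φ u ≠ ⊤)
    (hsc : IsStrictConvexOnDom Φ)
    (hlsc : LowerSemicontinuous Φ) (hhom : IsHomog Φ p)
    (hcs : ∀ c : ℝ, IsCompact {x : X | Φ x ≤ (c : EReal)}) :
    ∃ w : X, w ≠ 0 ∧ Φ w ≠ ⊤ ∧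
      sInf (RayleighSet Φ p) = p * (Φ w).toReal / ‖w‖ ^ p ∧
      0 < sInf (RayleighSet Φ p) := by
  have hp0 : 0 < p := by linarith
  have hbot (x : X) : Φ x ≠ ⊥ := ne_bot_of_le_ne_bot EReal.zero_ne_bot (hnn x)
  obtain ⟨u₀, hu₀, hu₀T⟩ := hproper
  have hv₀ : ‖u₀‖⁻¹ • u₀ ∈ Metric.sphere (0 : X) 1 := by simp [norm_smul, hu₀]
  have hv₀T := hhom.apply_smul_ne_top (inv_nonneg.2 (norm_nonneg u₀)) hu₀T
  obtain ⟨w, hw, hmin⟩ := hlsc.exists_isMinOn_of_isCompact_sublevel Metric.isClosed_sphere hv₀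
    (by simpa only [EReal.coe_toReal hv₀T (hbot _)] using hcs (Φ (‖u₀‖⁻¹ • u₀)).toReal)
  have hw1 : ‖w‖ = 1 := mem_sphere_zero_iff_norm.1 hw
  have hw0 : w ≠ 0 := norm_ne_zero_iff.1 (by simp [hw1])
  have hwT : Φ w ≠ ⊤ := ne_top_of_le_ne_top hv₀T (isMinOn_iff.1 hmin _ hv₀)
  have hleast := isLeast_rayleighSet hp0.le hhom hw hwT (hbot w) hmin
  have hpos : 0 < (Φ w).toReal :=
    EReal.toReal_pos (hsc.apply_pos hnn (hhom.apply_zero hp0.ne') hw0) hwT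
  refine ⟨w, hw0, hwT, ?_, ?_⟩ <;> rw [hleast.csInf_eq]
  · rw [hw1, Real.one_rpow, div_one]
  · positivity

theorem minimizer_exists (Φ : X → EReal) (p : ℝ) (hp : 1 < p)
    (hnn : ∀ x : X, (0 : EReal) ≤ Φ x)
    (hproper : ∃ u : X, u ≠ 0 ∧ Φ u ≠ ⊤)
    (hconv : IsConvexE Φ) (hsc : IsStrictConvexOnDom Φ)
    (hlsc : LowerSemicontinuous Φ) (hhom : IsHomog Φ p)
    (hcs : ∀ c : ℝ, IsCompact {x : X | Φ x ≤ (c : EReal)}) :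
    ∃ w : X, w ≠ 0 ∧ Φ w ≠ ⊤ ∧
      sInf (RayleighSet Φ p) = p * (Φ w).toReal / ‖w‖ ^ p ∧
      0 < sInf (RayleighSet Φ p) :=
  minimizer_exists_general Φ p hp hnn hproper hsc hlsc hhom hcs
end
end

section
/- A nonzero element w ∈ X satisfies λ_p = pΦ(w)/‖w‖^p if and only if there exist ζ ∈ ∂Φ(w) and ξ ∈ J_p(w) with ζ = λ_p ξ, i.e. ∂Φ(w) ∩ λ_p J_p(w) ≠ ∅. -/
/-!
By definition of `λ_p`, `Φ ≥ λ_p ‖·‖^p / p` everywhere, with equality exactly at the minimizers.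
At a minimizer `w` the subgradient inequality of `‖·‖^p / p` at `w`, scaled by `λ_p`, therefore
becomes one for `Φ`, so `λ_p J_p(w) ⊆ ∂Φ(w)`. Conversely, testing the subgradient inequalities of
`ξ ∈ J_p(w)` and `λ_p ξ ∈ ∂Φ(w)` along the ray `t ↦ t w`, on which both functionals are
`p`-homogeneous, gives Euler's identities `ξ w = ‖w‖^p` and `λ_p ξ w = p Φ(w)`.
-/

open Filter Set MeasureTheory Topology
open scoped ENNReal NNReal

noncomputable section

variable {X : Type*} [NormedAddCommGroup X] [NormedSpace ℝ X] [CompleteSpace X]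

/-- The line through `(1, c)` with slope `d` supports `t ↦ t ^ p * c` at `t = 1`, so it is the
tangent line there. -/
lemma mul_eq_of_forall_add_le_rpow_mul {p c d : ℝ}
    (h : ∀ t : ℝ, 0 < t → c + (t - 1) * d ≤ t ^ p * c) : p * c = d := by
  set f : ℝ → ℝ := fun t => t ^ p * c - (t - 1) * d
  have hmin : IsLocalMin f 1 := by
    filter_upwards [Ioi_mem_nhds zero_lt_one] with t ht
    simp only [f, Real.one_rpow, one_mul, sub_self, zero_mul, sub_zero]
    linarith [h t ht]
  have hderiv : HasDerivAt f (p * 1 ^ (p - 1) * c - 1 * d) 1 :=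
    ((Real.hasDerivAt_rpow_const (Or.inl one_ne_zero)).mul_const c).sub
      (((hasDerivAt_id 1).sub_const 1).mul_const d)
  have := hmin.hasDerivAt_eq_zero hderiv
  rw [Real.one_rpow, mul_one, one_mul] at this
  linarith

lemma smul_sub_self_eq_sub_one_smul {R M : Type*} [Ring R] [AddCommGroup M] [Module R M]
    (t : R) (w : M) : t • w - w = (t - 1) • w := by
  rw [sub_smul, one_smul]

lemma EReal.eq_coe_div_of_coe_mul_eq {p r : ℝ} (hp : 0 < p) {x : EReal}
    (h : (p : EReal) * x = r) : x = ((r / p : ℝ) : EReal) := by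
  induction x using EReal.rec with
  | bot => simp [EReal.coe_mul_bot_of_pos hp] at h
  | top => simp [EReal.coe_mul_top_of_pos hp] at h
  | coe x =>
    rw [← EReal.coe_mul, EReal.coe_eq_coe_iff] at h
    rw [EReal.coe_eq_coe_iff, ← h, mul_div_cancel_left₀ x hp.ne']

section

variable {E : Type*} [NormedAddCommGroup E]

lemma nonneg_of_mem_RayleighSet {Φ : E → EReal} {p r : ℝ} (hp : 0 ≤ p)
    (hnn : ∀ x, 0 ≤ Φ x) (hr : r ∈ RayleighSet Φ p) : 0 ≤ r := by
  obtain ⟨u, -, -, rfl⟩ := hr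
  have := EReal.toReal_nonneg (hnn u)
  positivity

lemma sInf_RayleighSet_mul_rpow_div_le {Φ : E → EReal} {p : ℝ} (hp : 0 < p)
    (hnn : ∀ x, 0 ≤ Φ x) (u : E) :
    ((sInf (RayleighSet Φ p) * ‖u‖ ^ p / p : ℝ) : EReal) ≤ Φ u := by
  rcases eq_or_ne u 0 with rfl | hu
  · simpa [Real.zero_rpow hp.ne'] using hnn 0
  rcases eq_or_ne (Φ u) ⊤ with hut | hut
  · exact hut ▸ le_top
  have hΦu : Φ u = (Φ u).toReal :=
    (EReal.coe_toReal hut (ne_bot_of_le_ne_bot EReal.zero_ne_bot (hnn u))).symm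
  have hle : sInf (RayleighSet Φ p) ≤ p * (Φ u).toReal / ‖u‖ ^ p :=
    csInf_le ⟨0, fun r hr => nonneg_of_mem_RayleighSet hp.le hnn hr⟩ ⟨u, hu, hut, rfl⟩
  rw [le_div_iff₀ (Real.rpow_pos_of_pos (norm_pos_iff.mpr hu) p)] at hle
  rw [hΦu, EReal.coe_le_coe_iff, div_le_iff₀ hp]
  linarith

variable [NormedSpace ℝ E]

/-- The functional `‖w‖ ^ (p - 1) • g`, with `g` a norming functional of `w`, lies in `J_p(w)`
by Young's inequality with the conjugate exponent `p / (p - 1)`. -/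
lemma Jdual_nonempty {p : ℝ} (hp : 1 < p) (w : E) : (Jdual p w).Nonempty := by
  obtain ⟨g, hg, hgw⟩ := exists_dual_vector'' ℝ w
  have hpq : p.HolderConjugate (p / (p - 1)) := Real.HolderConjugate.conjExponent hp
  have hw := norm_nonneg w
  have hpow : ‖w‖ ^ (p - 1) * ‖w‖ = ‖w‖ ^ p := by
    rw [← Real.rpow_add_one' hw (by linarith), sub_add_cancel]
  refine ⟨‖w‖ ^ (p - 1) • g, fun u => ?_⟩
  have hgu : g u ≤ ‖u‖ :=
    (le_abs_self _).trans ((g.le_opNorm u).trans (mul_le_of_le_one_left (norm_nonneg u) hg))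
  have hyoung := Real.young_inequality_of_nonneg (norm_nonneg u) (Real.rpow_nonneg hw (p - 1)) hpq
  rw [← Real.rpow_mul hw, hpq.sub_one_mul_conj] at hyoung
  have hsum : ‖w‖ ^ p / p + ‖w‖ ^ p / (p / (p - 1)) = ‖w‖ ^ p := by
    rw [div_eq_mul_inv, div_eq_mul_inv, ← mul_add, hpq.inv_add_inv_eq_one, mul_one]
  have hgw' : g w = ‖w‖ := by exact_mod_cast hgw
  simp only [ContinuousLinearMap.smul_apply, map_sub, hgw', smul_eq_mul, hpow]
  nlinarith [mul_le_mul_of_nonneg_left hgu (Real.rpow_nonneg hw (p - 1))]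

lemma apply_self_of_mem_Jdual {p : ℝ} (hp : p ≠ 0) {w : E} {ξ : E →L[ℝ] ℝ}
    (hξ : ξ ∈ Jdual p w) : ξ w = ‖w‖ ^ p := by
  refine (mul_eq_of_forall_add_le_rpow_mul fun t ht => ?_).symm.trans (mul_div_cancel₀ _ hp)
  have h := hξ (t • w)
  rwa [smul_sub_self_eq_sub_one_smul, map_smul, smul_eq_mul, norm_smul,
    Real.norm_of_nonneg ht.le, Real.mul_rpow ht.le (norm_nonneg w), mul_div_assoc] at h

lemma IsHomog.map_zero {Φ : E → EReal} {p : ℝ} (hhom : IsHomog Φ p) (hp : p ≠ 0) : Φ 0 = 0 := by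
  simpa [Real.zero_rpow hp] using hhom 0 le_rfl 0

lemma ne_top_of_mem_ERealSubdiff {Φ : E → EReal} {w u : E} {η : E →L[ℝ] ℝ}
    (hη : η ∈ ERealSubdiff Φ w) (hu : Φ u ≠ ⊤) : Φ w ≠ ⊤ := by
  intro hw
  have := hη u
  rw [hw, EReal.top_add_of_ne_bot (EReal.coe_ne_bot _), top_le_iff] at this
  exact hu this

lemma IsHomog.mul_eq_apply_of_mem_ERealSubdiff {Φ : E → EReal} {p a : ℝ} (hhom : IsHomog Φ p)
    {w : E} (hw : Φ w = a) {η : E →L[ℝ] ℝ} (hη : η ∈ ERealSubdiff Φ w) : p * a = η w := by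
  refine mul_eq_of_forall_add_le_rpow_mul fun t ht => ?_
  have h := hη (t • w)
  rwa [hw, hhom t ht.le w, hw, smul_sub_self_eq_sub_one_smul, map_smul, smul_eq_mul,
    ← EReal.coe_add, ← EReal.coe_mul, EReal.coe_le_coe_iff] at h

lemma smul_mem_ERealSubdiff_of_mem_Jdual {Φ : E → EReal} {p lam : ℝ} (hlam : 0 ≤ lam)
    (hle : ∀ u, ((lam * ‖u‖ ^ p / p : ℝ) : EReal) ≤ Φ u) {w : E}
    (hw : Φ w = ((lam * ‖w‖ ^ p / p : ℝ) : EReal)) {ξ : E →L[ℝ] ℝ} (hξ : ξ ∈ Jdual p w) :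
    lam • ξ ∈ ERealSubdiff Φ w := by
  intro u
  refine le_trans ?_ (hle u)
  rw [hw, ContinuousLinearMap.smul_apply, smul_eq_mul, ← EReal.coe_add, EReal.coe_le_coe_iff]
  have := mul_le_mul_of_nonneg_left (hξ u) hlam
  rw [mul_add, mul_div_assoc, mul_div_assoc] at *
  linarith

end

theorem minimizer_iff_eigen_general (Φ : X → EReal) (p lam : ℝ) (hp : 1 < p)
    (hnn : ∀ x : X, (0 : EReal) ≤ Φ x) (hhom : IsHomog Φ p)
    (hlam : lam = sInf (RayleighSet Φ p)) (w : X) :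
    ((p : ℝ) : EReal) * Φ w = ((lam * ‖w‖ ^ p : ℝ) : EReal) ↔
      ∃ ξ : X →L[ℝ] ℝ, ξ ∈ Jdual p w ∧ lam • ξ ∈ ERealSubdiff Φ w := by
  have hp0 : 0 < p := zero_lt_one.trans hp
  subst hlam
  constructor
  · intro h
    obtain ⟨ξ, hξ⟩ := Jdual_nonempty hp w
    refine ⟨ξ, hξ, smul_mem_ERealSubdiff_of_mem_Jdual ?_
      (sInf_RayleighSet_mul_rpow_div_le hp0 hnn) ?_ hξ⟩
    · exact Real.sInf_nonneg fun r hr => nonneg_of_mem_RayleighSet hp0.le hnn hr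
    · rw [EReal.eq_coe_div_of_coe_mul_eq hp0 h]
  · rintro ⟨ξ, hξ, hsub⟩
    have hw_top : Φ w ≠ ⊤ :=
      ne_top_of_mem_ERealSubdiff hsub (u := 0) (by simp [hhom.map_zero hp0.ne'])
    have hw : Φ w = (Φ w).toReal :=
      (EReal.coe_toReal hw_top (ne_bot_of_le_ne_bot EReal.zero_ne_bot (hnn w))).symm
    rw [hw, ← EReal.coe_mul, hhom.mul_eq_apply_of_mem_ERealSubdiff hw hsub,
      ContinuousLinearMap.smul_apply, apply_self_of_mem_Jdual hp0.ne' hξ, smul_eq_mul]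

theorem minimizer_iff_eigen (Φ : X → EReal) (p lam : ℝ) (hp : 1 < p)
    (hnn : ∀ x : X, (0 : EReal) ≤ Φ x)
    (hconv : IsConvexE Φ) (hsc : IsStrictConvexOnDom Φ)
    (hlsc : LowerSemicontinuous Φ) (hhom : IsHomog Φ p)
    (hcs : ∀ c : ℝ, IsCompact {x : X | Φ x ≤ (c : EReal)})
    (hlam : lam = sInf (RayleighSet Φ p)) (hpos : 0 < lam)
    (w : X) (hw : w ≠ 0) :
    ((p : ℝ) : EReal) * Φ w = ((lam * ‖w‖ ^ p : ℝ) : EReal) ↔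
      ∃ ξ : X →L[ℝ] ℝ, ξ ∈ Jdual p w ∧ lam • ξ ∈ ERealSubdiff Φ w :=
  minimizer_iff_eigen_general Φ p lam hp hnn hhom hlam w
end
end

section
/- If u ∈ Dom(Φ) \ {0} satisfies ∂Φ(u) ∩ λ J_p(u) ≠ ∅ for some λ ∈ ℝ, then λ = pΦ(u)/‖u‖^p ≥ λ_p. -/
open Filter Set MeasureTheory Topology
open scoped ENNReal NNReal

noncomputable section

variable {X : Type*} [NormedAddCommGroup X] [NormedSpace ℝ X] [CompleteSpace X]

/- Restricted to the ray `t ↦ t • u`, each of the two subgradient inequalities reads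
`A (t - 1) ≤ C (t ^ p - 1)` for all `t > 0`, with equality at `t = 1`; so the two sides are tangent
at `t = 1`, i.e. `A = p C`. For `ξ ∈ J_p(u)` this gives `ξ u = ‖u‖ ^ p`, and for `λ ξ ∈ ∂Φ(u)` it gives
`λ ξ u = p Φ(u)`. Hence `λ` is the Rayleigh quotient of `u`, which is at least its infimum `λ_p`. -/

theorem eq_mul_of_forall_mul_sub_one_le_mul_rpow_sub_one {p A C : ℝ}
    (h : ∀ t : ℝ, 0 < t → A * (t - 1) ≤ C * (t ^ p - 1)) : A = p * C := by
  set f : ℝ → ℝ := fun t => C * (t ^ p - 1) - A * (t - 1)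
  have hmin : IsLocalMin f 1 := by
    filter_upwards [eventually_gt_nhds one_pos] with t ht
    simp only [f, Real.one_rpow, sub_self, mul_zero]
    linarith [h t ht]
  have hderiv : HasDerivAt f (C * (p * 1 ^ (p - 1)) - A * 1) 1 :=
    (((Real.hasDerivAt_rpow_const (Or.inl one_ne_zero)).sub_const 1).const_mul C).sub
      (((hasDerivAt_id 1).sub_const 1).const_mul A)
  have hcrit := hmin.hasDerivAt_eq_zero hderiv
  rw [Real.one_rpow] at hcrit
  linarith

theorem apply_self_eq_norm_rpow_of_mem_Jdual {E : Type*} [NormedAddCommGroup E] [NormedSpace ℝ E]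
    {p : ℝ} (hp : p ≠ 0) {u : E} {ξ : E →L[ℝ] ℝ} (hξ : ξ ∈ Jdual p u) : ξ u = ‖u‖ ^ p := by
  have hray : ∀ t : ℝ, 0 < t → ξ u * (t - 1) ≤ ‖u‖ ^ p / p * (t ^ p - 1) := by
    intro t ht
    have hJ := hξ (t • u)
    rw [map_sub, map_smul, smul_eq_mul, norm_smul, Real.norm_of_nonneg ht.le,
      Real.mul_rpow ht.le (norm_nonneg u)] at hJ
    have hexpand : ‖u‖ ^ p / p * (t ^ p - 1) = t ^ p * ‖u‖ ^ p / p - ‖u‖ ^ p / p := by ring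
    linarith
  have hslope := eq_mul_of_forall_mul_sub_one_le_mul_rpow_sub_one hray
  field_simp at hslope
  linarith

theorem apply_self_eq_of_mem_ERealSubdiff {E : Type*} [NormedAddCommGroup E] [NormedSpace ℝ E]
    {Φ : E → EReal} {p c : ℝ} (hhom : IsHomog Φ p) {u : E} (hu : Φ u = c) {η : E →L[ℝ] ℝ}
    (hη : η ∈ ERealSubdiff Φ u) : η u = p * c := by
  refine eq_mul_of_forall_mul_sub_one_le_mul_rpow_sub_one fun t ht => ?_
  have hS := hη (t • u)
  rw [hhom t ht.le u, hu, map_sub, map_smul, smul_eq_mul, ← EReal.coe_mul,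
    ← EReal.coe_add, EReal.coe_le_coe_iff] at hS
  linarith

theorem bddBelow_rayleighSet {E : Type*} [NormedAddCommGroup E] {Φ : E → EReal} {p : ℝ}
    (hp : 0 ≤ p) (hnn : ∀ x, 0 ≤ Φ x) : BddBelow (RayleighSet Φ p) := by
  refine ⟨0, ?_⟩
  rintro r ⟨v, -, -, rfl⟩
  have hΦv := EReal.toReal_nonneg (hnn v)
  positivity

theorem eigenvalue_lower_bound_general (Φ : X → EReal) (p lam lamp : ℝ) (hp : 1 < p)
    (hnn : ∀ x : X, (0 : EReal) ≤ Φ x)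
    (hhom : IsHomog Φ p)
    (hlam : lamp = sInf (RayleighSet Φ p))
    (u : X) (hu0 : u ≠ 0) (hufin : Φ u ≠ ⊤)
    (h : ∃ ξ : X →L[ℝ] ℝ, ξ ∈ Jdual p u ∧ lam • ξ ∈ ERealSubdiff Φ u) :
    lam = p * (Φ u).toReal / ‖u‖ ^ p ∧ lamp ≤ lam := by
  obtain ⟨ξ, hξJ, hξS⟩ := h
  have hp0 : 0 < p := one_pos.trans hp
  have hΦu : Φ u = (Φ u).toReal :=
    (EReal.coe_toReal hufin ((EReal.bot_lt_zero.trans_le (hnn u)).ne')).symm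
  have hξu := apply_self_eq_norm_rpow_of_mem_Jdual hp0.ne' hξJ
  have hlamξu := apply_self_eq_of_mem_ERealSubdiff hhom hΦu hξS
  rw [smul_apply, smul_eq_mul, hξu] at hlamξu
  have hquot : lam = p * (Φ u).toReal / ‖u‖ ^ p := by
    rw [← hlamξu, mul_div_cancel_right₀ _ (Real.rpow_pos_of_pos (norm_pos_iff.mpr hu0) p).ne']
  exact ⟨hquot, hlam ▸ csInf_le (bddBelow_rayleighSet hp0.le hnn) ⟨u, hu0, hufin, hquot⟩⟩

theorem eigenvalue_lower_bound (Φ : X → EReal) (p lam lamp : ℝ) (hp : 1 < p)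
    (hnn : ∀ x : X, (0 : EReal) ≤ Φ x)
    (hconv : IsConvexE Φ) (hsc : IsStrictConvexOnDom Φ) (hhom : IsHomog Φ p)
    (hlam : lamp = sInf (RayleighSet Φ p))
    (u : X) (hu0 : u ≠ 0) (hufin : Φ u ≠ ⊤)
    (h : ∃ ξ : X →L[ℝ] ℝ, ξ ∈ Jdual p u ∧ lam • ξ ∈ ERealSubdiff Φ u) :
    lam = p * (Φ u).toReal / ‖u‖ ^ p ∧ lamp ≤ lam :=
  eigenvalue_lower_bound_general Φ p lam lamp hp hnn hhom hlam u hu0 hufin h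
end
end

section
/- Define α_w(u) := inf{α > 0 : αw ∈ P_w(u)}. Then α_w is positively homogeneous (α_w(su) = s α_w(u) for s > 0), lower semicontinuous on X, and continuous at each point of the form γw, γ ∈ ℝ, with α_w(γw) = γ⁺. -/
open Filter Set MeasureTheory Topology
open scoped ENNReal NNReal

noncomputable section

variable {X : Type*} [NormedAddCommGroup X] [NormedSpace ℝ X] [CompleteSpace X]

/-! For `w ≠ 0`, `α • w ∈ P_w(u)` exactly when `α` minimises `β ↦ ‖u - β • w‖` on `[0, ∞)`.
These minimisers form a nonempty closed interval `M(u) = rayMinimizers w u ⊆ [0, ∞)`, and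
`α_w(u) = min M(u)`: when `0 ∈ M(u)`, either `M(u) = {0}` and `sInf ∅ = 0`, or `M(u) ⊇ (0, b]`
for some `b > 0`. Homogeneity is `M(s • u) = s • M(u)`. The graph of `M` is closed, so
`{α_w ≤ y}` is the projection of a closed subset of `X × [0, y]`, which is closed since `[0, y]`
is compact. Finally, for every `α ∈ M(u)` the triangle inequality gives
`|α - γ⁺| ‖w‖ ≤ 2 ‖u - γ • w‖`, which yields both `α_w(γ • w) = γ⁺` and continuity at `γ • w`. -/

lemma Set.OrdConnected.sInf_inter_Ioi_zero {s : Set ℝ} (hs : s.OrdConnected) (h0 : s ⊆ Ici 0) :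
    sInf (s ∩ Ioi 0) = sInf s := by
  rcases (s ∩ Ioi 0).eq_empty_or_nonempty with hempty | ⟨b, hbs, hb⟩
  · have hs0 : s ⊆ {0} := fun x hx =>
      le_antisymm (not_lt.1 fun hx0 => hempty.subset ⟨hx, hx0⟩) (h0 hx)
    rcases subset_singleton_iff_eq.1 hs0 with rfl | rfl <;> simp [hempty]
  have hbdd : BddBelow (s ∩ Ioi 0) := ⟨0, fun y hy => le_of_lt hy.2⟩
  refine le_antisymm (le_csInf ⟨b, hbs⟩ fun x hx => ?_)
    (csInf_le_csInf ⟨0, h0⟩ ⟨b, hbs, hb⟩ inter_subset_left)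
  rcases (mem_Ici.1 (h0 hx)).eq_or_lt with rfl | hx0
  · calc sInf (s ∩ Ioi 0) ≤ sInf (Ioc 0 b) :=
          csInf_le_csInf hbdd (nonempty_Ioc.2 hb) fun y hy =>
            ⟨hs.out hx hbs (Ioc_subset_Icc_self hy), hy.1⟩
      _ = 0 := csInf_Ioc hb
  · exact csInf_le hbdd ⟨hx, hx0⟩

lemma abs_sub_max_zero_add_abs_sub_max_zero {β : ℝ} (hβ : 0 ≤ β) (γ : ℝ) :
    |β - max γ 0| + |γ - max γ 0| = |γ - β| := by
  rcases le_total 0 γ with hγ | hγ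
  · rw [max_eq_left hγ, sub_self, abs_zero, add_zero, abs_sub_comm]
  · rw [max_eq_right hγ, sub_zero, sub_zero, abs_of_nonneg hβ, abs_of_nonpos hγ,
      abs_of_nonpos (by linarith)]
    ring

section RayMinimizers

variable {E : Type*} [NormedAddCommGroup E] [NormedSpace ℝ E] {w u : E}

def rayMinimizers (w u : E) : Set ℝ :=
  {β | 0 ≤ β ∧ ∀ β' : ℝ, 0 ≤ β' → ‖u - β • w‖ ≤ ‖u - β' • w‖}

lemma smul_mem_projRay_iff (hw : w ≠ 0) {α : ℝ} :
    α • w ∈ ProjRay w u ↔ α ∈ rayMinimizers w u := by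
  constructor
  · rintro ⟨α', hα', heq, hmin⟩
    obtain rfl := smul_left_injective ℝ hw heq
    exact ⟨hα', hmin⟩
  · rintro ⟨hα, hmin⟩
    exact ⟨α, hα, rfl, hmin⟩

lemma rayMinimizers_nonempty (hw : w ≠ 0) (u : E) : (rayMinimizers w u).Nonempty := by
  have hcoercive : Tendsto (fun β : ℝ => ‖u - β • w‖) (cocompact ℝ) atTop := by
    refine tendsto_atTop_mono (fun β => ?_) (tendsto_atTop_add_const_right _ (-‖u‖)
      (tendsto_norm_cocompact_atTop.atTop_mul_const (norm_pos_iff.2 hw)))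
    rw [← norm_smul, norm_sub_rev, ← sub_eq_add_neg]
    exact norm_sub_norm_le _ _
  obtain ⟨β, hβ, hmin⟩ := (Continuous.continuousOn (by fun_prop)).exists_isMinOn' isClosed_Ici
    self_mem_Ici ((hcoercive.eventually_ge_atTop _).filter_mono inf_le_left)
  exact ⟨β, hβ, fun β' hβ' => hmin hβ'⟩

lemma isClosed_setOf_mem_rayMinimizers (w : E) :
    IsClosed {p : E × ℝ | p.2 ∈ rayMinimizers w p.1} := by
  have hgraph : {p : E × ℝ | p.2 ∈ rayMinimizers w p.1} =
      {p | 0 ≤ p.2} ∩ ⋂ β ∈ Ici (0 : ℝ), {p | ‖p.1 - p.2 • w‖ ≤ ‖p.1 - β • w‖} := by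
    ext
    simp [rayMinimizers]
  rw [hgraph]
  exact (isClosed_le continuous_const continuous_snd).inter
    (isClosed_biInter fun β _ => isClosed_le (by fun_prop) (by fun_prop))

lemma convex_rayMinimizers (w u : E) : Convex ℝ (rayMinimizers w u) := by
  intro a ha b hb s t hs ht hst
  obtain rfl : t = 1 - s := by linarith
  have hab : ‖u - a • w‖ = ‖u - b • w‖ := le_antisymm (ha.2 b hb.1) (hb.2 a ha.1)
  refine ⟨add_nonneg (mul_nonneg hs ha.1) (mul_nonneg ht hb.1), fun β hβ => ?_⟩
  calc ‖u - (s • a + (1 - s) • b) • w‖ = ‖s • (u - a • w) + (1 - s) • (u - b • w)‖ := by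
        congr 1
        module
    _ ≤ s * ‖u - a • w‖ + (1 - s) * ‖u - b • w‖ := by
        refine (norm_add_le _ _).trans_eq ?_
        rw [norm_smul, norm_smul, Real.norm_of_nonneg hs, Real.norm_of_nonneg ht]
    _ = ‖u - a • w‖ := by rw [← hab]; ring
    _ ≤ ‖u - β • w‖ := ha.2 β hβ

lemma smul_mem_rayMinimizers_smul {s α : ℝ} (hs : 0 < s) (h : α ∈ rayMinimizers w u) :
    s * α ∈ rayMinimizers w (s • u) := by
  have hscale : ∀ a : ℝ, ‖s • u - (s * a) • w‖ = s * ‖u - a • w‖ := fun a => by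
    rw [mul_smul, ← smul_sub, norm_smul, Real.norm_of_nonneg hs.le]
  refine ⟨mul_nonneg hs.le h.1, fun β hβ => ?_⟩
  calc ‖s • u - (s * α) • w‖ = s * ‖u - α • w‖ := hscale α
    _ ≤ s * ‖u - (β / s) • w‖ := by gcongr; exact h.2 _ (div_nonneg hβ hs.le)
    _ = ‖s • u - β • w‖ := by rw [← hscale, mul_div_cancel₀ _ hs.ne']

open Pointwise in
lemma rayMinimizers_smul {s : ℝ} (hs : 0 < s) :
    rayMinimizers w (s • u) = s • rayMinimizers w u := by
  ext β
  rw [mem_smul_set_iff_inv_smul_mem₀ hs.ne', smul_eq_mul]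
  constructor
  · intro h
    simpa [smul_smul, hs.ne'] using smul_mem_rayMinimizers_smul (inv_pos.2 hs) h
  · intro h
    simpa [hs.ne'] using smul_mem_rayMinimizers_smul hs h

lemma abs_sub_max_zero_mul_norm_le {α : ℝ} (hα : α ∈ rayMinimizers w u) (γ : ℝ) :
    |α - max γ 0| * ‖w‖ ≤ 2 * ‖u - γ • w‖ := by
  set m := max γ 0
  have hdist : ∀ a b : ℝ, ‖a • w - b • w‖ = |a - b| * ‖w‖ := fun a b => by
    rw [← sub_smul, norm_smul, Real.norm_eq_abs]
  have key : |α - m| * ‖w‖ + |γ - m| * ‖w‖ ≤ 2 * ‖u - γ • w‖ + |γ - m| * ‖w‖ :=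
    calc |α - m| * ‖w‖ + |γ - m| * ‖w‖ = ‖γ • w - α • w‖ := by
          rw [hdist, ← add_mul, abs_sub_max_zero_add_abs_sub_max_zero hα.1]
      _ ≤ ‖u - γ • w‖ + ‖u - α • w‖ :=
          (norm_sub_le_norm_sub_add_norm_sub _ u _).trans_eq (by rw [norm_sub_rev])
      _ ≤ ‖u - γ • w‖ + (‖u - γ • w‖ + ‖γ • w - m • w‖) := by
          gcongr
          exact (hα.2 m (le_max_right _ _)).trans (norm_sub_le_norm_sub_add_norm_sub _ _ _)
      _ = 2 * ‖u - γ • w‖ + |γ - m| * ‖w‖ := by rw [hdist]; ring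
  linarith

lemma alphaRay_eq_sInf_rayMinimizers (hw : w ≠ 0) (u : E) :
    alphaRay w u = sInf (rayMinimizers w u) := by
  have hpos : {α : ℝ | 0 < α ∧ α • w ∈ ProjRay w u} = rayMinimizers w u ∩ Ioi 0 := by
    ext α
    simp [smul_mem_projRay_iff hw, and_comm]
  rw [alphaRay, hpos, (convex_rayMinimizers w u).ordConnected.sInf_inter_Ioi_zero fun _ h => h.1]

lemma alphaRay_mem_rayMinimizers (hw : w ≠ 0) (u : E) : alphaRay w u ∈ rayMinimizers w u := by
  rw [alphaRay_eq_sInf_rayMinimizers hw]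
  exact ((isClosed_setOf_mem_rayMinimizers w).preimage (Continuous.prodMk_right u)).csInf_mem
    (rayMinimizers_nonempty hw u) ⟨0, fun _ h => h.1⟩

lemma alphaRay_le_of_mem_rayMinimizers (hw : w ≠ 0) {α : ℝ} (hα : α ∈ rayMinimizers w u) :
    alphaRay w u ≤ α := by
  rw [alphaRay_eq_sInf_rayMinimizers hw]
  exact csInf_le ⟨0, fun _ h => h.1⟩ hα

lemma alphaRay_smul (hw : w ≠ 0) {s : ℝ} (hs : 0 < s) (u : E) :
    alphaRay w (s • u) = s * alphaRay w u := by
  rw [alphaRay_eq_sInf_rayMinimizers hw, alphaRay_eq_sInf_rayMinimizers hw, rayMinimizers_smul hs,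
    Real.sInf_smul_of_nonneg hs.le, smul_eq_mul]

lemma lowerSemicontinuous_alphaRay (hw : w ≠ 0) : LowerSemicontinuous (alphaRay w) := by
  refine lowerSemicontinuous_iff_isClosed_preimage.2 fun y => ?_
  have hsublevel : alphaRay w ⁻¹' Iic y =
      Prod.fst '' {p : E × Icc 0 y | (p.2 : ℝ) ∈ rayMinimizers w p.1} := by
    ext u
    constructor
    · intro hu
      have hmem := alphaRay_mem_rayMinimizers hw u
      exact ⟨(u, ⟨alphaRay w u, hmem.1, hu⟩), hmem, rfl⟩
    · rintro ⟨p, hp, rfl⟩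
      exact (alphaRay_le_of_mem_rayMinimizers hw hp).trans p.2.2.2
  rw [hsublevel]
  exact isClosedMap_fst_of_compactSpace _
    ((isClosed_setOf_mem_rayMinimizers w).preimage
      (continuous_fst.prodMk (continuous_subtype_val.comp continuous_snd)))

lemma alphaRay_smul_self (hw : w ≠ 0) (γ : ℝ) : alphaRay w (γ • w) = max γ 0 := by
  have h := abs_sub_max_zero_mul_norm_le (alphaRay_mem_rayMinimizers hw (γ • w)) γ
  rw [sub_self, norm_zero, mul_zero] at h
  exact sub_eq_zero.1 (abs_nonpos_iff.1 (nonpos_of_mul_nonpos_left h (norm_pos_iff.2 hw)))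

lemma continuousAt_alphaRay_smul_self (hw : w ≠ 0) (γ : ℝ) :
    ContinuousAt (alphaRay w) (γ • w) := by
  refine continuousAt_of_locally_lipschitz one_pos (2 / ‖w‖) fun u _ => ?_
  rw [Real.dist_eq, alphaRay_smul_self hw, dist_eq_norm, div_mul_eq_mul_div,
    le_div_iff₀ (norm_pos_iff.2 hw)]
  exact abs_sub_max_zero_mul_norm_le (alphaRay_mem_rayMinimizers hw u) γ

end RayMinimizers

theorem alphaRay_properties (w : X) (hw : w ≠ 0) :
    (∀ s : ℝ, 0 < s → ∀ u : X, alphaRay w (s • u) = s * alphaRay w u) ∧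
      LowerSemicontinuous (alphaRay w) ∧
      ∀ γ : ℝ, ContinuousAt (alphaRay w) (γ • w) ∧ alphaRay w (γ • w) = max γ 0 :=
  ⟨fun _ hs u => alphaRay_smul hw hs u, lowerSemicontinuous_alphaRay hw,
    fun γ => ⟨continuousAt_alphaRay_smul_self hw γ, alphaRay_smul_self hw γ⟩⟩
end
end

section
/- For the local slope of Ψ(w) = ‖w‖^p/p on a Banach space X, one has |∂Ψ|(w) = ‖w‖^{p−1} for every w ∈ X. -/
open Filter Set MeasureTheory Topology
open scoped ENNReal NNReal

noncomputable section

variable {X : Type*} [NormedAddCommGroup X] [NormedSpace ℝ X] [CompleteSpace X]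

/-!
For `1 ≤ p` the convexity of `t ↦ t ^ p` gives the tangent-line bound
`a ^ p - b ^ p ≤ p a ^ (p - 1) (a - b)`; with `‖w‖ - ‖w + z‖ ≤ ‖z‖` it bounds every difference
quotient of `Ψ = ‖·‖ ^ p / p` at `w` by `‖w‖ ^ (p - 1)`. Along the ray `z = -t w`, `t → 0⁺`, one has
`Ψ (w - t w) = (1 - t) ^ p Ψ w`, whose right derivative `-‖w‖ ^ p` shows that the bound is attained.
-/

theorem Real.rpow_sub_rpow_le {p a b : ℝ} (hp : 1 ≤ p) (ha : 0 ≤ a) (hb : 0 ≤ b) :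
    a ^ p - b ^ p ≤ p * a ^ (p - 1) * (a - b) := by
  rcases ha.eq_or_lt with rfl | ha
  · rcases hp.eq_or_lt with rfl | hp
    · simp
    · simp [Real.zero_rpow (by linarith : p ≠ 0), Real.zero_rpow (by linarith : p - 1 ≠ 0),
        Real.rpow_nonneg hb]
  · -- Bernoulli's inequality for `(b / a) ^ p`, multiplied by `a ^ p`
    have hbern := one_add_mul_self_le_rpow_one_add
      (by linarith [div_nonneg hb ha.le] : -1 ≤ b / a - 1) hp
    rw [add_sub_cancel, Real.div_rpow hb ha.le, le_div_iff₀ (by positivity)] at hbern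
    have hpow : a ^ p = a ^ (p - 1) * a := by
      rw [Real.rpow_sub_one ha.ne', div_mul_cancel₀ _ ha.ne']
    have : (1 + p * (b / a - 1)) * a ^ p = a ^ p - p * a ^ (p - 1) * (a - b) := by
      rw [hpow]; field_simp; ring
    linarith

theorem norm_rpow_sub_norm_add_rpow_le {E : Type*} [SeminormedAddCommGroup E] {p : ℝ}
    (hp : 1 ≤ p) (w z : E) : ‖w‖ ^ p - ‖w + z‖ ^ p ≤ p * ‖w‖ ^ (p - 1) * ‖z‖ :=
  calc ‖w‖ ^ p - ‖w + z‖ ^ p ≤ p * ‖w‖ ^ (p - 1) * (‖w‖ - ‖w + z‖) :=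
        Real.rpow_sub_rpow_le hp (norm_nonneg _) (norm_nonneg _)
    _ ≤ p * ‖w‖ ^ (p - 1) * ‖z‖ := by
        gcongr
        simpa using norm_sub_norm_le w (w + z)

theorem hasDerivAt_norm_add_smul_neg_rpow {E : Type*} [SeminormedAddCommGroup E]
    [NormedSpace ℝ E] {p : ℝ} (hp : p ≠ 0) (w : E) :
    HasDerivAt (fun t : ℝ => ‖w + t • -w‖ ^ p / p) (-‖w‖ ^ p) 0 := by
  have hline : HasDerivAt (fun t : ℝ => (1 - t) ^ p * ‖w‖ ^ p / p) (-‖w‖ ^ p) 0 := by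
    refine ((((hasDerivAt_id' (x := (0 : ℝ))).const_sub 1).rpow_const (p := p)
      (by simp)).mul_const (‖w‖ ^ p)).div_const p |>.congr_deriv ?_
    field_simp
    simp
  refine hline.congr_of_eventuallyEq ?_
  filter_upwards [gt_mem_nhds one_pos] with t ht
  rw [smul_neg, ← sub_eq_add_neg, show w - t • w = (1 - t) • w by rw [sub_smul, one_smul],
    norm_smul, Real.norm_of_nonneg (by linarith), Real.mul_rpow (by linarith) (norm_nonneg w)]

section LocalSlope

variable {E : Type*} [NormedAddCommGroup E]

theorem localSlope_coe_le_ofReal {f : E → ℝ} {u : E} {L : ℝ}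
    (h : ∀ z, f u - f (u + z) ≤ L * ‖z‖) :
    localSlope (fun x => (f x : EReal)) u ≤ ENNReal.ofReal L := by
  refine limsup_le_of_le (by isBoundedDefault) ?_
  filter_upwards [self_mem_nhdsWithin] with z (hz : z ≠ 0)
  rw [← EReal.coe_sub, EReal.toReal_coe]
  exact ENNReal.ofReal_le_ofReal ((div_le_iff₀ (norm_pos_iff.2 hz)).2 (h z))

theorem ofReal_neg_div_norm_le_localSlope_coe [NormedSpace ℝ E] {f : E → ℝ} {u v : E} {d : ℝ}
    (hv : v ≠ 0) (hd : HasDerivWithinAt (fun t : ℝ => f (u + t • v)) d (Ioi 0) 0) :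
    ENNReal.ofReal (-d / ‖v‖) ≤ localSlope (fun x => (f x : EReal)) u := by
  simp only [localSlope, ← EReal.coe_sub, EReal.toReal_coe]
  have hray : Tendsto (fun t : ℝ => t • v) (𝓝[>] 0) (𝓝[≠] 0) := by
    refine tendsto_nhdsWithin_iff.2 ⟨?_, ?_⟩
    · exact ((continuous_id.smul continuous_const).tendsto' 0 0 (zero_smul _ _)).mono_left
        nhdsWithin_le_nhds
    · filter_upwards [self_mem_nhdsWithin] with t (ht : 0 < t) using smul_ne_zero ht.ne' hv
  have hslope := hasDerivWithinAt_iff_tendsto_slope.1 hd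
  rw [sdiff_singleton_eq_self self_notMem_Ioi] at hslope
  have hquot : Tendsto (fun t : ℝ => ENNReal.ofReal ((f u - f (u + t • v)) / ‖t • v‖))
      (𝓝[>] 0) (𝓝 (ENNReal.ofReal (-d / ‖v‖))) := by
    refine ENNReal.tendsto_ofReal (hslope.neg.div_const ‖v‖) |>.congr' ?_
    filter_upwards [self_mem_nhdsWithin] with t (ht : 0 < t)
    rw [slope_def_field, norm_smul, Real.norm_of_nonneg ht.le, zero_smul, add_zero, sub_zero,
      ← neg_div, neg_sub, div_div]
  calc ENNReal.ofReal (-d / ‖v‖)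
      = limsup (fun z : E => ENNReal.ofReal ((f u - f (u + z)) / ‖z‖)) (map (· • v) (𝓝[>] 0)) :=
        hquot.limsup_eq.symm.trans (limsup_comp _ _ _)
    _ ≤ _ := limsup_le_limsup_of_le hray

end LocalSlope

theorem localSlope_norm_power (p : ℝ) (hp : 1 < p) (w : X) :
    localSlope (fun x : X => ((‖x‖ ^ p / p : ℝ) : EReal)) w =
      ENNReal.ofReal (‖w‖ ^ (p - 1)) := by
  refine le_antisymm (localSlope_coe_le_ofReal fun z => ?_) ?_
  · rw [← sub_div, div_le_iff₀ (by linarith)]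
    linarith [norm_rpow_sub_norm_add_rpow_le hp.le w z]
  · rcases eq_or_ne w 0 with rfl | hw
    · simp [Real.zero_rpow (by linarith : p - 1 ≠ 0)]
    · have hdir := ofReal_neg_div_norm_le_localSlope_coe (f := fun x => ‖x‖ ^ p / p)
        (neg_ne_zero.2 hw) (hasDerivAt_norm_add_smul_neg_rpow (by linarith) w).hasDerivWithinAt
      rwa [norm_neg, neg_neg, ← Real.rpow_sub_one (norm_ne_zero_iff.2 hw)] at hdir
end
end
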